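/- Let k ∈ ℤ and set η(x) := (4kπ/A(x))·tanh(2kπ ∫₀ˣ dy/A(y)) and φ := A'/A on (0,∞). Then: (i) B_k'/B_k = η + φ on (0,∞); (ii) η is nonnegative; (iii) φ is nonnegative and decreasing; (iv) the function (1/2)η' − (1/4)η² + (B_k'/(2B_k))·η is identically equal to (2kπ)²/A(x)², which is nonnegative and decreasing on (0,∞). -/

import Mathlib

open MeasureTheory Set Filter

/-- The standing assumptions on the coefficient `A`. -/
def ACond (A : ℝ → ℝ) : Prop :=
  ContinuousOn A (Set.Ici 0) ∧
  ContDiffOn ℝ 1 A (Set.Ioi 0) ∧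
  (∀ x > 0, 0 < A x) ∧
  IntegrableOn (fun x => 1 / A x) (Set.Ioc 0 1) ∧
  (∀ x > 0, 0 ≤ deriv A x / A x) ∧
  AntitoneOn (fun x => deriv A x / A x) (Set.Ioi 0)

/-- `ζ_k(x) = cosh(2kπ ∫₀ˣ dy/A(y))`. -/
noncomputable def zeta (A : ℝ → ℝ) (k : ℤ) (x : ℝ) : ℝ :=
  Real.cosh (2 * (k : ℝ) * Real.pi * ∫ y in (0 : ℝ)..x, 1 / A y)

/-- `B_k(x) = A(x) ζ_k(x)²`. -/
noncomputable def Bfun (A : ℝ → ℝ) (k : ℤ) (x : ℝ) : ℝ :=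
  A x * (zeta A k x) ^ 2

/-- `η(x) = (4kπ/A(x))·tanh(2kπ ∫₀ˣ dy/A(y))`. -/
noncomputable def etaFun (A : ℝ → ℝ) (k : ℤ) (x : ℝ) : ℝ :=
  (4 * (k : ℝ) * Real.pi / A x) * Real.tanh (2 * (k : ℝ) * Real.pi * ∫ y in (0 : ℝ)..x, 1 / A y)

/-!
Write `θ = 2kπ ∫₀ˣ dy/A(y)`, so `θ' = 2kπ/A`, `ζ_k = cosh θ` and `η = 2θ' tanh θ`.
Then `B_k'/B_k = A'/A + 2θ' tanh θ = φ + η`, and `tanh' = 1 - tanh²` gives the Riccati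
equation `η' = 2(2kπ/A)² - η²/2 - ηφ`, which reduces (iv) to algebra. `θ` has the sign
of `k`, so `η ≥ 0`; `φ ≥ 0` makes `A` nondecreasing, hence `(2kπ/A)²` nonincreasing.
-/

open Real

theorem HasDerivAt.tanh {f : ℝ → ℝ} {f' x : ℝ} (hf : HasDerivAt f f' x) :
    HasDerivAt (fun t => Real.tanh (f t)) ((1 - Real.tanh (f x) ^ 2) * f') x := by
  simp only [tanh_eq_sinh_div_cosh]
  refine (hf.sinh.div hf.cosh (cosh_pos _).ne').congr_deriv ?_
  have := cosh_pos (f x)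
  field_simp

theorem mul_tanh_mul_nonneg (c : ℝ) {t : ℝ} (ht : 0 ≤ t) : 0 ≤ c * Real.tanh (c * t) := by
  rw [tanh_eq_sinh_div_cosh, ← mul_div_assoc]
  refine div_nonneg ?_ (cosh_pos _).le
  rcases le_total 0 c with hc | hc
  · exact mul_nonneg hc (sinh_nonneg_iff.2 (mul_nonneg hc ht))
  · exact mul_nonneg_of_nonpos_of_nonpos hc
      (sinh_nonpos_iff.2 (mul_nonpos_of_nonpos_of_nonneg hc ht))

section IntegrableNearZero

variable {E : Type*} [NormedAddCommGroup E] {f : ℝ → E}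

theorem intervalIntegrable_zero_of_integrableOn_Ioc (hf : IntegrableOn f (Ioc 0 1))
    (hc : ContinuousOn f (Ioi 0)) {x : ℝ} (hx : 0 ≤ x) : IntervalIntegrable f volume 0 x := by
  rw [intervalIntegrable_iff_integrableOn_Ioc_of_le hx]
  have hIcc : IntegrableOn f (Icc 1 x) :=
    (hc.mono fun y hy => zero_lt_one.trans_le hy.1).integrableOn_Icc
  refine (hf.union hIcc).mono_set fun y hy => ?_
  rcases le_total y 1 with h | h
  exacts [Or.inl ⟨hy.1, h⟩, Or.inr ⟨h, hy.2⟩]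

theorem hasDerivAt_integral_of_integrableOn_Ioc [NormedSpace ℝ E] [CompleteSpace E]
    (hf : IntegrableOn f (Ioc 0 1)) (hc : ContinuousOn f (Ioi 0)) {x : ℝ} (hx : 0 < x) :
    HasDerivAt (fun t => ∫ y in (0 : ℝ)..t, f y) (f x) x :=
  intervalIntegral.integral_hasDerivAt_right
    (intervalIntegrable_zero_of_integrableOn_Ioc hf hc hx.le)
    (hc.stronglyMeasurableAtFilter isOpen_Ioi x hx) (hc.continuousAt (Ioi_mem_nhds hx))

end IntegrableNearZero

noncomputable def phase (A : ℝ → ℝ) (k : ℤ) (x : ℝ) : ℝ :=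
  2 * (k : ℝ) * π * ∫ y in (0 : ℝ)..x, 1 / A y

namespace ACond

variable {A : ℝ → ℝ} (hA : ACond A) (k : ℤ) {x : ℝ}
include hA

theorem hasDerivAt (hx : 0 < x) : HasDerivAt A (deriv A x) x :=
  ((hA.2.1.differentiableOn one_ne_zero).differentiableAt (Ioi_mem_nhds hx)).hasDerivAt

theorem continuousOn_inv : ContinuousOn (fun y => 1 / A y) (Ioi 0) :=
  continuousOn_const.div (hA.1.mono Ioi_subset_Ici_self) fun y hy => (hA.2.2.1 y hy).ne'

theorem hasDerivAt_phase (hx : 0 < x) :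
    HasDerivAt (phase A k) (2 * (k : ℝ) * π / A x) x :=
  ((hasDerivAt_integral_of_integrableOn_Ioc hA.2.2.2.1 hA.continuousOn_inv hx).const_mul
    (2 * (k : ℝ) * π)).congr_deriv (mul_one_div _ _)

theorem integral_inv_nonneg (hx : 0 ≤ x) : 0 ≤ ∫ y in (0 : ℝ)..x, 1 / A y := by
  rw [intervalIntegral.integral_of_le hx]
  exact setIntegral_nonneg measurableSet_Ioc fun y hy => (one_div_pos.2 (hA.2.2.1 y hy.1)).le

theorem monotoneOn : MonotoneOn A (Ioi 0) := by
  refine monotoneOn_of_deriv_nonneg (convex_Ioi 0) (hA.1.mono Ioi_subset_Ici_self) ?_ ?_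
  · rw [interior_Ioi]; exact hA.2.1.differentiableOn one_ne_zero
  · intro y hy
    rw [interior_Ioi] at hy
    simpa using (le_div_iff₀ (hA.2.2.1 y hy)).1 (hA.2.2.2.2.1 y hy)

theorem etaFun_nonneg (hx : 0 < x) : 0 ≤ etaFun A k x := by
  have hpos := hA.2.2.1 x hx
  have h : etaFun A k x = 2 / A x * (2 * (k : ℝ) * π * tanh (2 * (k : ℝ) * π *
      ∫ y in (0 : ℝ)..x, 1 / A y)) := by
    rw [etaFun]; ring
  rw [h]
  exact mul_nonneg (by positivity) (mul_tanh_mul_nonneg _ (hA.integral_inv_nonneg hx.le))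

theorem Bfun_pos (hx : 0 < x) : 0 < Bfun A k x :=
  mul_pos (hA.2.2.1 x hx) (pow_pos (cosh_pos _) 2)

theorem hasDerivAt_Bfun (hx : 0 < x) :
    HasDerivAt (Bfun A k) (Bfun A k x * (etaFun A k x + deriv A x / A x)) x := by
  have hpos := hA.2.2.1 x hx
  refine ((hA.hasDerivAt hx).mul ((hA.hasDerivAt_phase k hx).cosh.pow 2)).congr_deriv ?_
  simp only [Bfun, zeta, etaFun, phase, Pi.pow_apply, tanh_eq_sinh_div_cosh]
  have := cosh_pos (2 * (k : ℝ) * π * ∫ y in (0 : ℝ)..x, 1 / A y)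
  field_simp
  ring

theorem hasDerivAt_etaFun (hx : 0 < x) :
    HasDerivAt (etaFun A k) (2 * ((2 * (k : ℝ) * π) ^ 2 / A x ^ 2)
      - etaFun A k x ^ 2 / 2 - etaFun A k x * (deriv A x / A x)) x := by
  have hpos := hA.2.2.1 x hx
  refine (((hasDerivAt_const x (4 * (k : ℝ) * π)).div (hA.hasDerivAt hx) hpos.ne').mul
    (hA.hasDerivAt_phase k hx).tanh).congr_deriv ?_
  simp only [etaFun, phase, Pi.div_apply]
  field_simp
  ring

end ACond

theorem MonotoneOn.antitoneOn_const_div_sq {s : Set ℝ} {f : ℝ → ℝ} (hf : MonotoneOn f s)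
    (hpos : ∀ x ∈ s, 0 < f x) {c : ℝ} (hc : 0 ≤ c) : AntitoneOn (fun x => c / f x ^ 2) s :=
  fun a ha _ hb hab => div_le_div_of_nonneg_left hc (pow_pos (hpos a ha) 2)
    (pow_le_pow_left₀ (hpos a ha).le (hf ha hb hab) 2)

/-- With `η` and `φ = A'/A` as above: (i) `B_k'/B_k = η + φ` on `(0,∞)`;
(ii) `η ≥ 0`; (iii) `φ` is nonnegative and decreasing; (iv) `(1/2)η' − (1/4)η² + (B_k'/(2B_k))η`
equals `(2kπ)²/A²`, which is nonnegative and decreasing on `(0,∞)`. -/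
theorem stmt2 (A : ℝ → ℝ) (hA : ACond A) (k : ℤ) :
    (∀ x > 0, deriv (Bfun A k) x / Bfun A k x = etaFun A k x + deriv A x / A x) ∧
    (∀ x > 0, 0 ≤ etaFun A k x) ∧
    ((∀ x > 0, 0 ≤ deriv A x / A x) ∧ AntitoneOn (fun x => deriv A x / A x) (Set.Ioi 0)) ∧
    (∀ x > 0,
      (1 / 2) * deriv (etaFun A k) x - (1 / 4) * (etaFun A k x) ^ 2
          + (deriv (Bfun A k) x / (2 * Bfun A k x)) * etaFun A k x
        = (2 * (k : ℝ) * Real.pi) ^ 2 / (A x) ^ 2) ∧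
    (∀ x > 0, 0 ≤ (2 * (k : ℝ) * Real.pi) ^ 2 / (A x) ^ 2) ∧
    AntitoneOn (fun x => (2 * (k : ℝ) * Real.pi) ^ 2 / (A x) ^ 2) (Set.Ioi 0) := by
  have hlogDeriv : ∀ x > 0, deriv (Bfun A k) x / Bfun A k x = etaFun A k x + deriv A x / A x :=
    fun x hx => by
      rw [(hA.hasDerivAt_Bfun k hx).deriv, mul_div_cancel_left₀ _ (hA.Bfun_pos k hx).ne']
  refine ⟨hlogDeriv, fun x hx => hA.etaFun_nonneg k hx, hA.2.2.2.2,
    fun x hx => ?_, fun x _ => by positivity,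
    hA.monotoneOn.antitoneOn_const_div_sq hA.2.2.1 (sq_nonneg _)⟩
  rw [(hA.hasDerivAt_etaFun k hx).deriv, div_mul_eq_div_div_swap, hlogDeriv x hx]
  ring
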